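/- Let t ≥ 1 and let G be a graph such that there exist initial sets P_a^0 and P_b^0 for which the two-opinion activation process in G takes at least t rounds, i.e., P_a^t ∪ P_b^t ≠ P_a^{t-1} ∪ P_b^{t-1}. Then the treedepth of G is at least log_3(t+2). -/

import Mathlib

open scoped Classical

variable {V : Type*}

/-- Reachability within a vertex subset `s` of `G` (walks staying inside `s`). -/
def reachIn (G : SimpleGraph V) (s : Finset V) (x y : V) : Prop :=
  Relation.ReflTransGen (fun a b => a ∈ s ∧ b ∈ s ∧ G.Adj a b) x y

/-- The induced subgraph of `G` on `s` is connected. -/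
def connOn (G : SimpleGraph V) (s : Finset V) : Prop :=
  ∀ x ∈ s, ∀ y ∈ s, reachIn G s x y

/-- The connected component of `v` in the induced subgraph of `G` on `s`. -/
noncomputable def compOf [DecidableEq V] (G : SimpleGraph V) (s : Finset V) (v : V) : Finset V :=
  s.filter (fun u => reachIn G s v u)

/-- Fueled recursive definition of treedepth of the induced subgraph on `s`. -/
noncomputable def tdAux [DecidableEq V] (G : SimpleGraph V) : ℕ → Finset V → ℕ
  | 0, s => s.card
  | n + 1, s =>
    if h : s.card ≤ 1 then s.card
    else if connOn G s then
      1 + s.inf' (Finset.card_pos.mp (by omega)) (fun v => tdAux G n (s.erase v))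
    else
      s.sup (fun v => tdAux G n (compOf G s v))

/-- Treedepth of the induced subgraph of `G` on `s`. -/
noncomputable def tdOn [DecidableEq V] (G : SimpleGraph V) (s : Finset V) : ℕ :=
  tdAux G s.card s

/-- Treedepth of a finite graph `G`. -/
noncomputable def treedepth [Fintype V] [DecidableEq V] (G : SimpleGraph V) : ℕ :=
  tdOn G Finset.univ

open scoped Classical

variable {V : Type*}

/-- Number of neighbors of `v` that lie in `s`. -/
noncomputable def nbrCount [Fintype V] (G : SimpleGraph V) (s : Finset V) (v : V) : ℕ :=
  (s.filter fun u => G.Adj v u).card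

/-- One update step for one opinion: `Pc` is the set holding this opinion,
`Pnc` the set holding the other opinion. -/
noncomputable def updOp [Fintype V] (G : SimpleGraph V) (f1 f2 : V → ℕ)
    (Pc Pnc : Finset V) : Finset V :=
  Pc ∪ Finset.univ.filter (fun v =>
    (v ∉ Pc ∧ v ∉ Pnc ∧ f1 v ≤ nbrCount G Pc v) ∨ (v ∈ Pnc ∧ f2 v ≤ nbrCount G Pc v))

/-- The two-opinion activation process: `(proc2 G f1 f2 Pa0 Pb0 i).1` is `P_a^i`
and `.2` is `P_b^i`. -/
noncomputable def proc2 [Fintype V] (G : SimpleGraph V) (f1 f2 : V → ℕ)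
    (Pa0 Pb0 : Finset V) : ℕ → Finset V × Finset V
  | 0 => (Pa0, Pb0)
  | n + 1 =>
    let p := proc2 G f1 f2 Pa0 Pb0 n
    (updOp G f1 f2 p.1 p.2, updOp G f1 f2 p.2 p.1)

/-- Selector for an opinion: `true` is opinion `a`, `false` is opinion `b`. -/
noncomputable def procSel [Fintype V] (G : SimpleGraph V) (f1 f2 : V → ℕ)
    (Pa0 Pb0 : Finset V) (c : Bool) (i : ℕ) : Finset V :=
  if c then (proc2 G f1 f2 Pa0 Pb0 i).1 else (proc2 G f1 f2 Pa0 Pb0 i).2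

/-- The single-opinion target set activation process. -/
noncomputable def sproc [Fintype V] (G : SimpleGraph V) (f : V → ℕ)
    (T : Finset V) : ℕ → Finset V
  | 0 => T
  | n + 1 =>
    let P := sproc G f T n
    P ∪ Finset.univ.filter (fun v => v ∉ P ∧ f v ≤ nbrCount G P v)

/-!
Trace a vertex that changes the union at round `t` backwards in time. A vertex newly holding
opinion `c` at round `i + 1` either just left the other opinion, or its number of
`c`-neighbours grew in round `i`, so it has a neighbour newly holding `c` at round `i`. This gives
a walk with loops through `t` vertex–opinion pairs activated at distinct rounds. The last vertex
is new to both opinions and may be repeated once more, so we get a walk on `t + 1` vertices in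
which every vertex occurs at most twice.

A walk in which every vertex occurs at most `r` times has at most `(r + 1) ^ td - 1` vertices:
in a disconnected graph it stays in one component, and in a connected graph the occurrences of
the optimal root `v` cut it into at most `count v + 1` pieces avoiding `v`, one of which is long
and lives in `G - v`.
-/

theorem List.exists_infix_notMem_length_add_one_le {α : Type*} [DecidableEq α] (v : α)
    (l : List α) :
    ∃ p, p <:+: l ∧ v ∉ p ∧ l.length + 1 ≤ (l.count v + 1) * (p.length + 1) := by
  by_cases hv : v ∈ l
  · obtain ⟨l₁, l₂, rfl⟩ := List.append_of_mem hv
    obtain ⟨p₁, h₁, hv₁, hp₁⟩ := exists_infix_notMem_length_add_one_le v l₁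
    obtain ⟨p₂, h₂, hv₂, hp₂⟩ := exists_infix_notMem_length_add_one_le v l₂
    have hinf₁ : l₁ <:+: l₁ ++ v :: l₂ := (List.prefix_append _ _).isInfix
    have hinf₂ : l₂ <:+: l₁ ++ v :: l₂ :=
      ((List.suffix_cons v l₂).trans (List.suffix_append _ _)).isInfix
    simp only [List.length_append, List.length_cons, List.count_append, List.count_cons_self]
    rcases le_total p₁.length p₂.length with h | h
    · exact ⟨p₂, h₂.trans hinf₂, hv₂, by nlinarith⟩
    · exact ⟨p₁, h₁.trans hinf₁, hv₁, by nlinarith⟩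
  · exact ⟨l, List.infix_rfl, hv, by simp [List.count_eq_zero.2 hv]⟩
termination_by l.length
decreasing_by all_goals (subst_vars; simp only [List.length_append, List.length_cons]; omega)

theorem List.count_map_fst_le_card {α β : Type*} [DecidableEq α] [Fintype β]
    {L : List (α × β)} (hL : L.Nodup) (a : α) :
    (L.map Prod.fst).count a ≤ Fintype.card β := by
  have hnodup : ((L.filter (·.1 == a)).map Prod.snd).Nodup := by
    refine (hL.filter _).map_on fun x hx y hy hxy => Prod.ext ?_ hxy
    simp only [List.mem_filter, beq_iff_eq] at hx hy
    rw [hx.2, hy.2]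
  calc (L.map Prod.fst).count a = ((L.filter (·.1 == a)).map Prod.snd).length := by
        rw [List.count_eq_countP, List.countP_map, List.countP_eq_length_filter, List.length_map]
        rfl
    _ ≤ Fintype.card β := hnodup.length_le_card

section Treedepth

variable {G : SimpleGraph V} {s : Finset V}

theorem reachIn_symm {x y : V} (h : reachIn G s x y) : reachIn G s y x := by
  refine (@Relation.ReflTransGen.stdSymm _ _ ⟨?_⟩).symm _ _ h
  rintro a b ⟨ha, hb, hab⟩
  exact ⟨hb, ha, hab.symm⟩

variable [DecidableEq V]

theorem mem_compOf {v u : V} : u ∈ compOf G s v ↔ u ∈ s ∧ reachIn G s v u :=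
  Finset.mem_filter

theorem compOf_ssubset (v : V) (hc : ¬ connOn G s) : compOf G s v ⊂ s := by
  refine (Finset.filter_subset _ s).ssubset_of_ne fun h => hc fun x hx y hy => ?_
  rw [← h, Finset.mem_filter] at hx hy
  exact (reachIn_symm hx.2).trans hy.2

theorem tdAux_succ_of_card_le {n : ℕ} (h : s.card ≤ n) : tdAux G (n + 1) s = tdAux G n s := by
  induction n generalizing s with
  | zero => rw [Finset.card_eq_zero.1 (Nat.le_zero.1 h)]; rfl
  | succ n ih =>
    rw [tdAux, tdAux]
    split_ifs with h1 hc
    · rfl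
    · congr 1
      refine Finset.inf'_congr _ rfl fun v hv => ih ?_
      rw [Finset.card_erase_of_mem hv]
      omega
    · refine Finset.sup_congr rfl fun v hv => ih ?_
      have := Finset.card_lt_card (compOf_ssubset v hc)
      omega

theorem tdAux_eq_tdOn {n : ℕ} (h : s.card ≤ n) : tdAux G n s = tdOn G s := by
  induction n, h using Nat.le_induction with
  | base => rfl
  | succ n hn ih => rw [tdAux_succ_of_card_le hn, ih]

theorem tdOn_eq_card_of_card_le_one (h : s.card ≤ 1) : tdOn G s = s.card := by
  rw [tdOn]
  interval_cases hs : s.card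
  · exact hs
  · rw [tdAux, dif_pos hs.le, hs]

theorem exists_tdOn_eq_tdOn_erase_add_one (h1 : 1 < s.card) (hc : connOn G s) :
    ∃ v ∈ s, tdOn G s = tdOn G (s.erase v) + 1 := by
  obtain ⟨n, hn⟩ : ∃ n, s.card = n + 1 := Nat.exists_eq_add_one.2 (by omega)
  have hs : s.Nonempty := Finset.card_pos.1 (by omega)
  obtain ⟨v, hv, hmin⟩ := Finset.exists_mem_eq_inf' hs fun v => tdAux G n (s.erase v)
  refine ⟨v, hv, ?_⟩
  rw [tdOn, hn, tdAux, dif_neg (by omega), if_pos hc, hmin,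
    tdAux_eq_tdOn (by rw [Finset.card_erase_of_mem hv]; omega), add_comm]

theorem tdOn_compOf_le {v : V} (h1 : 1 < s.card) (hc : ¬ connOn G s) (hv : v ∈ s) :
    tdOn G (compOf G s v) ≤ tdOn G s := by
  obtain ⟨n, hn⟩ : ∃ n, s.card = n + 1 := Nat.exists_eq_add_one.2 (by omega)
  have hcard := Finset.card_lt_card (compOf_ssubset v hc)
  calc tdOn G (compOf G s v) = tdAux G n (compOf G s v) := (tdAux_eq_tdOn (by omega)).symm
    _ ≤ s.sup fun v => tdAux G n (compOf G s v) :=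
      Finset.le_sup (f := fun v => tdAux G n (compOf G s v)) hv
    _ = tdOn G s := by rw [tdOn, hn, tdAux, dif_neg (by omega), if_neg hc]

theorem mem_compOf_of_isChain {x : V} {l : List V} (hs : ∀ y ∈ x :: l, y ∈ s)
    (hl : (x :: l).IsChain (Relation.ReflGen G.Adj)) : ∀ y ∈ x :: l, y ∈ compOf G s x := by
  have hl' : (x :: l).IsChain (Relation.ReflGen fun a b => a ∈ s ∧ b ∈ s ∧ G.Adj a b) := by
    refine hl.imp_of_mem_imp fun a b ha hb hab => ?_
    rcases hab with _ | hab
    exacts [.refl, .single ⟨hs a ha, hs b hb, hab⟩]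
  intro y hy
  refine mem_compOf.2 ⟨hs y hy, hl'.induction (reachIn G s x) _ (fun a b hab hxa => ?_)
    (fun _ => Relation.ReflTransGen.refl) y hy⟩
  exact hxa.trans (Relation.reflGen_le_reflTransGen _ _ hab)

end Treedepth

theorem length_add_one_le_pow_tdOn [DecidableEq V] {G : SimpleGraph V} {r : ℕ} (s : Finset V)
    (l : List V) (hs : ∀ x ∈ l, x ∈ s) (hl : l.IsChain (Relation.ReflGen G.Adj))
    (hr : ∀ v, l.count v ≤ r) : l.length + 1 ≤ (r + 1) ^ tdOn G s := by
  induction s using Finset.strongInduction generalizing l with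
  | H s ih =>
  obtain _ | ⟨x, l'⟩ := l
  · exact Nat.one_le_pow _ _ (Nat.succ_pos r)
  have hx : x ∈ s := hs x List.mem_cons_self
  by_cases h1 : s.card ≤ 1
  · have hconst : ∀ y ∈ x :: l', x = y := fun y hy => Finset.card_le_one.1 h1 x hx y (hs y hy)
    have hlen : (x :: l').length ≤ r := List.count_eq_length.2 hconst ▸ hr x
    rw [tdOn_eq_card_of_card_le_one h1, le_antisymm h1 (Finset.card_pos.2 ⟨x, hx⟩), pow_one]
    omega
  rw [not_le] at h1
  by_cases hc : connOn G s
  · obtain ⟨v, hv, htd⟩ := exists_tdOn_eq_tdOn_erase_add_one h1 hc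
    obtain ⟨p, hp, hvp, hlen⟩ := List.exists_infix_notMem_length_add_one_le v (x :: l')
    have hps : ∀ y ∈ p, y ∈ s.erase v := fun y hy =>
      Finset.mem_erase.2 ⟨ne_of_mem_of_not_mem hy hvp, hs y (hp.subset hy)⟩
    have hp_bound := ih _ (Finset.erase_ssubset hv) p hps (hl.infix hp)
      fun w => (hp.sublist.count_le w).trans (hr w)
    calc (x :: l').length + 1 ≤ ((x :: l').count v + 1) * (p.length + 1) := hlen
      _ ≤ (r + 1) * (r + 1) ^ tdOn G (s.erase v) :=
        Nat.mul_le_mul (Nat.succ_le_succ (hr v)) hp_bound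
      _ = (r + 1) ^ tdOn G s := by rw [htd, pow_succ']
  · calc (x :: l').length + 1 ≤ (r + 1) ^ tdOn G (compOf G s x) :=
          ih _ (compOf_ssubset x hc) _ (mem_compOf_of_isChain hs hl) hl hr
      _ ≤ (r + 1) ^ tdOn G s := Nat.pow_le_pow_right (Nat.succ_pos r) (tdOn_compOf_le h1 hc hx)

section Activation

variable [Fintype V] {G : SimpleGraph V} {f1 f2 : V → ℕ} {Pa0 Pb0 : Finset V}

theorem mem_updOp {v : V} {Pc Pnc : Finset V} :
    v ∈ updOp G f1 f2 Pc Pnc ↔ v ∈ Pc ∨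
      (v ∉ Pc ∧ v ∉ Pnc ∧ f1 v ≤ nbrCount G Pc v) ∨
      (v ∈ Pnc ∧ f2 v ≤ nbrCount G Pc v) := by
  simp [updOp]

theorem exists_adj_mem_sdiff_of_nbrCount_lt {P P' : Finset V} {v : V}
    (h : nbrCount G P v < nbrCount G P' v) : ∃ u ∈ P', u ∉ P ∧ G.Adj v u := by
  by_contra! hP
  rw [nbrCount, nbrCount] at h
  refine h.not_ge (Finset.card_le_card fun u hu => ?_)
  rw [Finset.mem_filter] at hu ⊢
  exact ⟨not_not.1 fun hu' => hP u hu.1 hu' hu.2, hu.2⟩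

theorem procSel_succ (c : Bool) (i : ℕ) :
    procSel G f1 f2 Pa0 Pb0 c (i + 1) =
      updOp G f1 f2 (procSel G f1 f2 Pa0 Pb0 c i) (procSel G f1 f2 Pa0 Pb0 (!c) i) := by
  cases c <;> rfl

theorem monotone_procSel (c : Bool) : Monotone (procSel G f1 f2 Pa0 Pb0 c) :=
  monotone_nat_of_le_succ fun i => by
    rw [procSel_succ]
    exact Finset.subset_union_left

theorem mem_union_proc2_iff [DecidableEq V] {v : V} {i : ℕ} :
    v ∈ (proc2 G f1 f2 Pa0 Pb0 i).1 ∪ (proc2 G f1 f2 Pa0 Pb0 i).2 ↔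
      ∃ c, v ∈ procSel G f1 f2 Pa0 Pb0 c i := by
  simp [procSel, or_comm]

theorem union_proc2_mono [DecidableEq V] {i j : ℕ} (h : i ≤ j) :
    (proc2 G f1 f2 Pa0 Pb0 i).1 ∪ (proc2 G f1 f2 Pa0 Pb0 i).2 ⊆
      (proc2 G f1 f2 Pa0 Pb0 j).1 ∪ (proc2 G f1 f2 Pa0 Pb0 j).2 := fun v hv => by
  obtain ⟨c, hc⟩ := mem_union_proc2_iff.1 hv
  exact mem_union_proc2_iff.2 ⟨c, monotone_procSel c h hc⟩

theorem exists_activated_before_of_activated {n : ℕ} {v : V} {c : Bool}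
    (hv : v ∈ procSel G f1 f2 Pa0 Pb0 c (n + 2)) (hv' : v ∉ procSel G f1 f2 Pa0 Pb0 c (n + 1)) :
    ∃ u c', u ∈ procSel G f1 f2 Pa0 Pb0 c' (n + 1) ∧ u ∉ procSel G f1 f2 Pa0 Pb0 c' n ∧
      Relation.ReflGen G.Adj v u := by
  have hvn : v ∉ procSel G f1 f2 Pa0 Pb0 c n := fun h => hv' (monotone_procSel c n.le_succ h)
  have new_nbr : ∀ k, k ≤ nbrCount G (procSel G f1 f2 Pa0 Pb0 c (n + 1)) v →
      nbrCount G (procSel G f1 f2 Pa0 Pb0 c n) v < k → ∃ u c',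
        u ∈ procSel G f1 f2 Pa0 Pb0 c' (n + 1) ∧ u ∉ procSel G f1 f2 Pa0 Pb0 c' n ∧
        Relation.ReflGen G.Adj v u := fun k hk hk' => by
    obtain ⟨u, hu, hu', hvu⟩ := exists_adj_mem_sdiff_of_nbrCount_lt (hk'.trans_le hk)
    exact ⟨u, c, hu, hu', .single hvu⟩
  have hstep := hv'
  rw [procSel_succ, mem_updOp] at hv hstep
  push Not at hstep
  obtain h | ⟨-, hnc, hf1⟩ | ⟨hnc, hf2⟩ := hv
  · exact absurd h hv'
  · exact new_nbr _ hf1 (hstep.2.1 hvn fun h => hnc (monotone_procSel _ n.le_succ h))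
  · by_cases hnc' : v ∈ procSel G f1 f2 Pa0 Pb0 (!c) n
    · exact new_nbr _ hf2 (hstep.2.2 hnc')
    · exact ⟨v, !c, hnc, hnc', .refl⟩

theorem exists_activation_walk : ∀ (n : ℕ) {v : V} {c : Bool},
    v ∈ procSel G f1 f2 Pa0 Pb0 c (n + 1) → v ∉ procSel G f1 f2 Pa0 Pb0 c n →
    ∃ L : List (V × Bool), L.length = n ∧
      (∀ p ∈ L, p.1 ∈ procSel G f1 f2 Pa0 Pb0 p.2 n) ∧ ((v, c) :: L).Nodup ∧
      (((v, c) :: L).map Prod.fst).IsChain (Relation.ReflGen G.Adj)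
  | 0, _, _, _, _ => ⟨[], rfl, by simp, by simp, by simp⟩
  | n + 1, _, _, hv, hv' => by
    obtain ⟨u, c', hu, hu', hvu⟩ := exists_activated_before_of_activated hv hv'
    obtain ⟨L, hlen, hmem, hnodup, hchain⟩ := exists_activation_walk n hu hu'
    have hmem' : ∀ p ∈ (u, c') :: L, p.1 ∈ procSel G f1 f2 Pa0 Pb0 p.2 (n + 1) := by
      rintro p (_ | ⟨_, hp⟩)
      exacts [hu, monotone_procSel _ n.le_succ (hmem p hp)]
    refine ⟨(u, c') :: L, by rw [List.length_cons, hlen], hmem', ?_, ?_⟩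
    · exact List.nodup_cons.2 ⟨fun h => hv' (hmem' _ h), hnodup⟩
    · simpa [hvu] using hchain

theorem exists_walk_of_activated [DecidableEq V] {n : ℕ} {x : V} {c : Bool}
    (hx : x ∈ procSel G f1 f2 Pa0 Pb0 c (n + 1))
    (hxn : ∀ d, x ∉ procSel G f1 f2 Pa0 Pb0 d n) :
    ∃ l : List V, l.length = n + 2 ∧ l.IsChain (Relation.ReflGen G.Adj) ∧
      ∀ v, l.count v ≤ 2 := by
  obtain ⟨L, hlen, hmem, hnodup, hchain⟩ := exists_activation_walk n hx (hxn c)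
  -- `x` is new to both opinions, so the pair `(x, !c)` can be prepended as a loop.
  have hnodup' : ((x, !c) :: (x, c) :: L).Nodup := by
    refine List.nodup_cons.2 ⟨?_, hnodup⟩
    intro h
    rcases List.mem_cons.1 h with h | h
    exacts [Bool.not_ne_self c (congrArg Prod.snd h), hxn _ (hmem _ h)]
  refine ⟨((x, !c) :: (x, c) :: L).map Prod.fst, by simp [hlen], ?_,
    List.count_map_fst_le_card hnodup'⟩
  exact List.isChain_cons_cons.2 ⟨.refl, by simpa using hchain⟩

end Activation

theorem rounds_treedepth_bound_general {V : Type*} [Fintype V] [DecidableEq V]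
    (G : SimpleGraph V) (f1 f2 : V → ℕ) (Pa0 Pb0 : Finset V) (t : ℕ)
    (hne : (proc2 G f1 f2 Pa0 Pb0 t).1 ∪ (proc2 G f1 f2 Pa0 Pb0 t).2
        ≠ (proc2 G f1 f2 Pa0 Pb0 (t - 1)).1 ∪ (proc2 G f1 f2 Pa0 Pb0 (t - 1)).2) :
    Real.logb 3 ((t : ℝ) + 2) ≤ (treedepth G : ℝ) := by
  obtain ⟨n, rfl⟩ : ∃ n, t = n + 1 :=
    Nat.exists_eq_add_one.2 (Nat.pos_of_ne_zero fun ht => hne (by rw [ht]))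
  rw [Nat.add_sub_cancel] at hne
  obtain ⟨x, hx, hxn⟩ :=
    Finset.exists_of_ssubset ((union_proc2_mono n.le_succ).ssubset_of_ne hne.symm)
  obtain ⟨c, hc⟩ := mem_union_proc2_iff.1 hx
  obtain ⟨l, hlen, hchain, hcount⟩ :=
    exists_walk_of_activated hc fun d hd => hxn (mem_union_proc2_iff.2 ⟨d, hd⟩)
  have hwalk := length_add_one_le_pow_tdOn Finset.univ l (fun _ _ => Finset.mem_univ _)
    hchain hcount
  rw [hlen] at hwalk
  rw [Real.logb_le_iff_le_rpow (by norm_num) (by positivity), Real.rpow_natCast]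
  exact_mod_cast hwalk

/-- If for some initial sets the two-opinion activation process in `G` takes at least
`t ≥ 1` rounds (i.e. `P_a^t ∪ P_b^t ≠ P_a^{t-1} ∪ P_b^{t-1}`), then
`td(G) ≥ log_3(t+2)`. -/
theorem rounds_treedepth_bound {V : Type*} [Fintype V] [DecidableEq V]
    (G : SimpleGraph V) (f1 f2 : V → ℕ) (Pa0 Pb0 : Finset V) (t : ℕ) (ht : 1 ≤ t)
    (hne : (proc2 G f1 f2 Pa0 Pb0 t).1 ∪ (proc2 G f1 f2 Pa0 Pb0 t).2
        ≠ (proc2 G f1 f2 Pa0 Pb0 (t - 1)).1 ∪ (proc2 G f1 f2 Pa0 Pb0 (t - 1)).2) :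
    Real.logb 3 ((t : ℝ) + 2) ≤ (treedepth G : ℝ) :=
  rounds_treedepth_bound_general G f1 f2 Pa0 Pb0 t hne
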